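/- arXiv:1909.09363 — 7 statements merged into one kernel-verified Lean document; each statement's English description precedes it below -/
import Mathlib

section
/- Let n ≥ 1 and k ≥ 1 be integers, and let λ_1, …, λ_r be positive integers with Σ_{j=1}^r λ_j ≤ n. Suppose there exists a partition ρ of n that contains (λ_1, …, λ_r) as a sub-multiset and that generates all k-partitions of n. Then for every multiset μ = {μ_1, …, μ_l} of positive integers that generates all k-partitions of n − Σ_{j=1}^r λ_j, the combined multiset {λ_1, …, λ_r, μ_1, …, μ_l} generates all k-partitions of n. -/
/-- A partition of `n`: a multiset of positive integers summing to `n`. -/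
def IsPartition (n : ℕ) (lam : Multiset ℕ) : Prop :=
  (∀ x ∈ lam, 0 < x) ∧ lam.sum = n

/-- `μ` generates `lam`: `μ` decomposes into disjoint sub-multisets, one summing
to each part of `lam`. -/
def Generates (μ lam : Multiset ℕ) : Prop :=
  ∃ P : Multiset (Multiset ℕ), P.sum = μ ∧ P.map Multiset.sum = lam

/-- `μ` generates all partitions of `n` with at most `k` parts. -/
def GeneratesAll (n k : ℕ) (μ : Multiset ℕ) : Prop :=
  ∀ lam : Multiset ℕ, IsPartition n lam → Multiset.card lam ≤ k → Generates μ lam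

/-- The greedy partition: repeatedly take `⌈remainder / k⌉`. -/
def greedyList (k : ℕ) : ℕ → List ℕ
  | 0 => []
  | (n + 1) =>
    if hk : k = 0 then []
    else (n + k) / k :: greedyList k (n + 1 - (n + k) / k)
  termination_by n => n
  decreasing_by
    have h1 : 1 ≤ (n + k) / k :=
      (Nat.one_le_div_iff (Nat.pos_of_ne_zero hk)).mpr (Nat.le_add_left k n)
    omega

/-!
Take the blocks by which `ρ` generates `λ`, and split each block into its parts lying in `L` and
the rest. The rest-sums, with zeros dropped, form a partition of `n - ΣL` into at most `k` parts,
so `μ` generates it; attaching the `L`-parts back to the corresponding blocks of `μ` makes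
`L + μ` generate `λ`.
-/

theorem Multiset.exists_split_of_le_sum {α : Type*} [DecidableEq α] (P : Multiset (Multiset α))
    {L : Multiset α} (hL : L ≤ P.sum) :
    ∃ Q : Multiset (Multiset α × Multiset α),
      Q.map (fun q => q.1 + q.2) = P ∧ (Q.map Prod.fst).sum = L := by
  induction P using Multiset.induction generalizing L with
  | empty => exact ⟨0, rfl, by simpa [eq_comm] using hL⟩
  | cons a P ih =>
    have hrest : L - a ≤ P.sum := by
      rw [Multiset.sub_le_iff_le_add, add_comm]
      simpa using hL
    obtain ⟨Q, hQ, hQL⟩ := ih hrest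
    refine ⟨(L ∩ a, a - L ∩ a) ::ₘ Q, ?_, ?_⟩
    · simp [hQ, add_tsub_cancel_of_le Multiset.inter_le_right]
    · rw [Multiset.map_cons, Multiset.sum_cons, hQL]
      ext x
      simp only [Multiset.count_add, Multiset.count_inter, Multiset.count_sub]
      omega

namespace Generates

theorem sum_eq {μ lam : Multiset ℕ} (h : Generates μ lam) : lam.sum = μ.sum := by
  obtain ⟨P, rfl, rfl⟩ := h
  exact Multiset.sum_join.symm

theorem exists_split {ρ lam L : Multiset ℕ} (h : Generates ρ lam) (hL : L ≤ ρ) :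
    ∃ Q : Multiset (ℕ × ℕ), Q.map (fun q => q.1 + q.2) = lam ∧ Generates L (Q.map Prod.fst) := by
  obtain ⟨P, rfl, rfl⟩ := h
  obtain ⟨Q, rfl, rfl⟩ := P.exists_split_of_le_sum hL
  refine ⟨Q.map fun q => (q.1.sum, q.2.sum), ?_, Q.map Prod.fst, rfl, ?_⟩ <;> simp

theorem map_add {ι : Type*} {μ ν : Multiset ℕ} {f g : ι → ℕ} {Q : Multiset ι}
    (hf : Generates μ (Q.map f)) (hg : Generates ν (Q.map g)) :
    Generates (μ + ν) (Q.map fun i => f i + g i) := by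
  classical
  induction Q using Multiset.induction generalizing μ ν with
  | empty =>
    obtain ⟨P, rfl, hP⟩ := hf
    obtain ⟨R, rfl, hR⟩ := hg
    simp_all only [Multiset.map_zero, Multiset.map_eq_zero]
    exact ⟨0, rfl, rfl⟩
  | cons i Q ih =>
    obtain ⟨P, rfl, hP⟩ := hf
    obtain ⟨R, rfl, hR⟩ := hg
    rw [Multiset.map_cons, ← Multiset.map_eq_cons] at hP hR
    obtain ⟨p, hp, hpi, hPQ⟩ := hP
    obtain ⟨r, hr, hri, hRQ⟩ := hR
    obtain ⟨S, hS, hSQ⟩ := ih ⟨_, rfl, hPQ⟩ ⟨_, rfl, hRQ⟩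
    refine ⟨(p + r) ::ₘ S, ?_, ?_⟩
    · rw [Multiset.sum_cons, hS]
      conv_rhs => rw [← Multiset.cons_erase hp, ← Multiset.cons_erase hr]
      simp only [Multiset.sum_cons]
      abel
    · simp [hSQ, hpi, hri]

theorem of_filter_ne_zero {μ lam : Multiset ℕ} (h : Generates μ (lam.filter (· ≠ 0))) :
    Generates μ lam := by
  obtain ⟨P, rfl, hP⟩ := h
  refine ⟨P + Multiset.replicate (lam.count 0) 0, by simp, ?_⟩
  rw [Multiset.map_add, hP, Multiset.map_replicate, Multiset.sum_zero, ← Multiset.filter_eq',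
    ← Multiset.filter_add_not (· ≠ 0) lam]
  simp

end Generates

theorem isPartition_filter_ne_zero (s : Multiset ℕ) : IsPartition s.sum (s.filter (· ≠ 0)) := by
  refine ⟨fun x hx => Nat.pos_of_ne_zero (Multiset.mem_filter.mp hx).2, ?_⟩
  conv_rhs => rw [← Multiset.filter_add_not (· ≠ 0) s]
  simp [Multiset.filter_eq']

theorem completion_generates_general (n k : ℕ)
    (L : Multiset ℕ)
    (hcomplete : ∃ ρ : Multiset ℕ, IsPartition n ρ ∧ L ≤ ρ ∧ GeneratesAll n k ρ)
    (μ : Multiset ℕ)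
    (hμ : GeneratesAll (n - L.sum) k μ) :
    GeneratesAll n k (L + μ) := by
  obtain ⟨ρ, -, hLρ, hρ⟩ := hcomplete
  intro lam hlam hcard
  obtain ⟨Q, rfl, hLQ⟩ := (hρ lam hlam hcard).exists_split hLρ
  have hsum : (Q.map Prod.snd).sum = n - L.sum := by
    rw [← hlam.2, ← hLQ.sum_eq, Multiset.sum_map_add]
    omega
  have hcard' : Multiset.card ((Q.map Prod.snd).filter (· ≠ 0)) ≤ k :=
    calc _ ≤ Multiset.card (Q.map Prod.snd) := Multiset.card_le_card (Multiset.filter_le _ _)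
      _ ≤ k := by simpa using hcard
  have hrest := hμ _ (hsum ▸ isPartition_filter_ne_zero _) hcard'
  exact hLQ.map_add hrest.of_filter_ne_zero

/-- if `(λ_1, …, λ_r)` (a multiset `L` of positive integers with
`L.sum ≤ n`) can be completed to a partition `ρ` of `n` generating all
`k`-partitions of `n`, then for any multiset `μ` of positive integers generating
all `k`-partitions of `n - L.sum`, the union `L + μ` generates all
`k`-partitions of `n`. -/
theorem completion_generates (n k : ℕ) (hn : 1 ≤ n) (hk : 1 ≤ k)
    (L : Multiset ℕ) (hLpos : ∀ x ∈ L, 0 < x) (hLsum : L.sum ≤ n)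
    (hcomplete : ∃ ρ : Multiset ℕ, IsPartition n ρ ∧ L ≤ ρ ∧ GeneratesAll n k ρ)
    (μ : Multiset ℕ) (hμpos : ∀ x ∈ μ, 0 < x)
    (hμ : GeneratesAll (n - L.sum) k μ) :
    GeneratesAll n k (L + μ) :=
  completion_generates_general n k L hcomplete μ hμ
end

section
/- Let n ≥ 1 and k ≥ 1 be integers. The greedy partition μ(n,k), defined by μ_1 = ⌈n/k⌉ and μ_i = ⌈(n − Σ_{j<i} μ_j)/k⌉ for i > 1 (stopping when the remainder n − Σ_{j≤i} μ_j reaches 0), is a partition of n that generates all k-partitions of n. -/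
/-
Induct on `n`. The first greedy part is `a = ⌈n/k⌉`, and a partition of `n` into at most `k`
parts has a part `M ≥ a` by pigeonhole. Removing `a` from `M` (dropping `M` if `M = a`) leaves a
partition of `n - a` into at most `k` parts, which the rest of the greedy partition, being the
greedy partition of `n - a`, generates; putting `a` back into the block that builds `M - a`
generates the original partition.
-/

theorem IsPartition.eq_zero {lam : Multiset ℕ} (h : IsPartition 0 lam) : lam = 0 :=
  Multiset.eq_zero_of_forall_notMem fun x hx =>
    (h.1 x hx).ne' (Multiset.sum_eq_zero_iff.1 h.2 x hx)

theorem Generates.zero : Generates 0 0 :=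
  ⟨0, Multiset.sum_zero, Multiset.map_zero _⟩

theorem Generates.cons {μ lam : Multiset ℕ} (h : Generates μ lam) (a : ℕ) :
    Generates (a ::ₘ μ) (a ::ₘ lam) := by
  obtain ⟨P, hsum, hmap⟩ := h
  exact ⟨{a} ::ₘ P, by simp [hsum], by simp [hmap]⟩

theorem Generates.cons_add {μ lam : Multiset ℕ} {b : ℕ} (h : Generates μ (b ::ₘ lam)) (a : ℕ) :
    Generates (a ::ₘ μ) ((a + b) ::ₘ lam) := by
  obtain ⟨P, hsum, hmap⟩ := h
  obtain ⟨S, hS, hSb⟩ := Multiset.mem_map.1 (hmap ▸ Multiset.mem_cons_self b lam)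
  obtain ⟨Q, rfl⟩ := Multiset.exists_cons_of_mem hS
  rw [Multiset.map_cons, hSb, Multiset.cons_inj_right] at hmap
  exact ⟨(a ::ₘ S) ::ₘ Q, by simp [← hsum], by simp [hSb, hmap]⟩

theorem add_div_le_of_card_le_of_forall_le {lam : Multiset ℕ} {n k M : ℕ} (hk : 0 < k)
    (hsum : lam.sum = n + 1) (hcard : Multiset.card lam ≤ k) (hM : ∀ x ∈ lam, x ≤ M) :
    (n + k) / k ≤ M := by
  have hle : n + 1 ≤ k * M := calc
    n + 1 = lam.sum := hsum.symm
    _ ≤ Multiset.card lam * M := Multiset.sum_le_card_nsmul lam M hM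
    _ ≤ k * M := Nat.mul_le_mul_right M hcard
  refine Nat.lt_succ_iff.1 ((Nat.div_lt_iff_lt_mul hk).2 ?_)
  rw [Nat.succ_mul, Nat.mul_comm]
  omega

theorem greedyList_succ {k : ℕ} (hk : 0 < k) (n : ℕ) :
    greedyList k (n + 1) = (n + k) / k :: greedyList k (n + 1 - (n + k) / k) := by
  rw [greedyList, dif_neg hk.ne']

theorem div_add_self_pos {k : ℕ} (hk : 0 < k) (n : ℕ) : 0 < (n + k) / k :=
  Nat.div_pos (Nat.le_add_left k n) hk

theorem add_div_le_succ {k : ℕ} (hk : 0 < k) (n : ℕ) : (n + k) / k ≤ n + 1 :=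
  Nat.div_le_of_le_mul (by nlinarith)

theorem isPartition_greedyList {k : ℕ} (hk : 0 < k) (n : ℕ) :
    IsPartition n (greedyList k n : Multiset ℕ) := by
  induction n using Nat.strong_induction_on with
  | _ n ih =>
  rcases n with _ | n
  · simp [greedyList, IsPartition]
  have ha := div_add_self_pos hk n
  have ha' := add_div_le_succ hk n
  obtain ⟨hpos, hsum⟩ := ih (n + 1 - (n + k) / k) (by omega)
  rw [greedyList_succ hk, ← Multiset.cons_coe]
  refine ⟨fun x hx => ?_, ?_⟩
  · rcases Multiset.mem_cons.1 hx with rfl | hx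
    exacts [ha, hpos x hx]
  · rw [Multiset.sum_cons, hsum]
    omega

theorem generatesAll_greedyList {k : ℕ} (hk : 0 < k) (n : ℕ) :
    GeneratesAll n k (greedyList k n : Multiset ℕ) := by
  induction n using Nat.strong_induction_on with
  | _ n ih =>
  rintro lam ⟨hpos, hsum⟩ hcard
  rcases n with _ | n
  · rw [IsPartition.eq_zero ⟨hpos, hsum⟩, greedyList]
    exact Generates.zero
  set a := (n + k) / k
  have ha := div_add_self_pos hk n
  have hrest := ih (n + 1 - a) (by omega)
  rw [greedyList_succ hk, ← Multiset.cons_coe]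
  obtain ⟨M, hM, hmax⟩ := lam.toFinset.exists_max_image id
    (Multiset.toFinset_nonempty.2 (by rintro rfl; simp at hsum))
  rw [Multiset.mem_toFinset] at hM
  have haM : a ≤ M := add_div_le_of_card_le_of_forall_le hk hsum hcard fun x hx =>
    hmax x (Multiset.mem_toFinset.2 hx)
  obtain ⟨rho, rfl⟩ := Multiset.exists_cons_of_mem hM
  simp only [Multiset.sum_cons, Multiset.card_cons, Multiset.mem_cons, forall_eq_or_imp]
    at hsum hcard hpos
  rcases haM.eq_or_lt with rfl | hlt
  · exact (hrest rho ⟨hpos.2, by omega⟩ (by omega)).cons a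
  · have hgen : Generates _ ((M - a) ::ₘ rho) :=
      hrest _ ⟨Multiset.forall_mem_cons.2 ⟨Nat.sub_pos_of_lt hlt, hpos.2⟩,
        by rw [Multiset.sum_cons]; omega⟩ (by rw [Multiset.card_cons]; omega)
    simpa [Nat.add_sub_cancel' haM] using hgen.cons_add a

theorem greedy_isPartition_and_generatesAll_general (n k : ℕ) (hk : 1 ≤ k) :
    IsPartition n (↑(greedyList k n) : Multiset ℕ) ∧
      GeneratesAll n k (↑(greedyList k n) : Multiset ℕ) :=
  ⟨isPartition_greedyList hk n, generatesAll_greedyList hk n⟩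

/-- the greedy partition `μ(n,k)` is a partition of `n` and
generates all `k`-partitions of `n`. -/
theorem greedy_isPartition_and_generatesAll (n k : ℕ) (hn : 1 ≤ n) (hk : 1 ≤ k) :
    IsPartition n (↑(greedyList k n) : Multiset ℕ) ∧
      GeneratesAll n k (↑(greedyList k n) : Multiset ℕ) :=
  greedy_isPartition_and_generatesAll_general n k hk
end

section
/- Let n ≥ 1 and k ≥ 1 be integers and let λ = (λ_1 ≥ λ_2 ≥ ⋯ ≥ λ_l) be a partition of n that generates all k-partitions of n. Then λ_1 ≤ ⌈n/k⌉. -/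
lemma mem_of_mem_msum {α : Type*} {a : α} {P : Multiset (Multiset α)}
    (h : a ∈ P.sum) : ∃ s ∈ P, a ∈ s := by
  induction P using Multiset.induction_on with
  | empty => simp at h
  | cons t P ih =>
    rw [Multiset.sum_cons, Multiset.mem_add] at h
    rcases h with h | h
    · exact ⟨t, Multiset.mem_cons_self _ _, h⟩
    · obtain ⟨s, hs, ha⟩ := ih h
      exact ⟨s, Multiset.mem_cons_of_mem hs, ha⟩

/-- if `lam = (λ_1 ≥ ⋯ ≥ λ_l)` is a partition of `n` that generates
all `k`-partitions of `n`, then its largest part `λ_1` is at most `⌈n/k⌉`. -/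
theorem largest_part_le_ceil (n k : ℕ) (hn : 1 ≤ n) (hk : 1 ≤ k)
    (lam : List ℕ) (hsorted : lam.Pairwise (· ≥ ·))
    (hpart : IsPartition n (↑lam : Multiset ℕ))
    (hgen : GeneratesAll n k (↑lam : Multiset ℕ))
    (hne : lam ≠ []) :
    lam.head hne ≤ (n + k - 1) / k := by
  set c : ℕ := (n + k - 1) / k with hc
  have hkc : n ≤ c * k := by
    have h1 : k * c + (n + k - 1) % k = n + k - 1 := Nat.div_add_mod _ _
    have h2 : (n + k - 1) % k < k := Nat.mod_lt _ (by omega)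
    have h3 : k * c = c * k := Nat.mul_comm _ _
    omega
  have hc1 : 1 ≤ c := by
    rw [hc, Nat.le_div_iff_mul_le (by omega)]; omega
  set q := n / c with hq
  set r := n % c with hr
  have h1 : c * q + r = n := Nat.div_add_mod n c
  have h2 : r < c := Nat.mod_lt n (by omega)
  -- balanced partition
  set bal : List ℕ := List.replicate q c ++ (if r = 0 then [] else [r]) with hbal
  have hbsum : bal.sum = q * c + (if r = 0 then 0 else r) := by
    by_cases h : r = 0 <;> simp [hbal, h, List.sum_replicate, smul_eq_mul]
  have hmul : q * c = c * q := Nat.mul_comm _ _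
  have hsum : (↑bal : Multiset ℕ).sum = n := by
    rw [Multiset.sum_coe, hbsum]
    by_cases h : r = 0 <;> simp [h] <;> omega
  have hpos : ∀ x ∈ (↑bal : Multiset ℕ), 0 < x := by
    intro x hx
    simp only [hbal, Multiset.mem_coe, List.mem_append, List.mem_replicate] at hx
    rcases hx with ⟨_, rfl⟩ | hx
    · omega
    · by_cases h : r = 0 <;> simp [h] at hx <;> omega
  have hle : ∀ x ∈ (↑bal : Multiset ℕ), x ≤ c := by
    intro x hx
    simp only [hbal, Multiset.mem_coe, List.mem_append, List.mem_replicate] at hx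
    rcases hx with ⟨_, rfl⟩ | hx
    · exact le_rfl
    · by_cases h : r = 0 <;> simp [h] at hx <;> omega
  have hcard : Multiset.card (↑bal : Multiset ℕ) ≤ k := by
    have hqk : q ≤ k := by
      refine Nat.le_of_mul_le_mul_left ?_ (show 0 < c by omega)
      calc c * q ≤ n := by omega
        _ ≤ c * k := hkc
    have hcl : Multiset.card (↑bal : Multiset ℕ) = q + (if r = 0 then 0 else 1) := by
      by_cases h : r = 0 <;> simp [hbal, h]
    rw [hcl]
    by_cases h : r = 0
    · simpa [h] using hqk
    · simp only [h, if_false]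
      rcases eq_or_lt_of_le hqk with h' | hlt
      · have : c * q = c * k := by rw [h']
        omega
      · omega
  obtain ⟨P, hPsum, hPmap⟩ := hgen (↑bal) ⟨hpos, hsum⟩ hcard
  have hhead : lam.head hne ∈ P.sum := by
    rw [hPsum]
    exact List.head_mem hne
  obtain ⟨s, hsP, hmem⟩ := mem_of_mem_msum hhead
  have hA : lam.head hne ≤ s.sum := Multiset.single_le_sum (fun x _ => Nat.zero_le x) _ hmem
  have hB : s.sum ∈ (↑bal : Multiset ℕ) := by
    rw [← hPmap]
    exact Multiset.mem_map_of_mem _ hsP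
  exact hA.trans (hle _ hB)
end

section
/- Let n ≥ 1 and k ≥ 1 be integers, let λ = (λ_1 ≥ λ_2 ≥ ⋯ ≥ λ_l) be a partition of n that generates all k-partitions of n, and let γ = (γ_1 ≥ ⋯ ≥ γ_p) be a partition of n with p ≤ k. Suppose S_1, …, S_p are pairwise disjoint subsets of {1, …, l} whose union is the prefix {1, …, m} for some m < l, and that Σ_{j ∈ S_i} λ_j ≤ γ_i for every i ∈ {1, …, p}. Then there exists an index i ∈ {1, …, p} with γ_i − Σ_{j ∈ S_i} λ_j ≥ λ_{m+1}; that is, the next greedy placement never gets stuck. -/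
private lemma msum_le_msum {s t : Multiset ℕ} (h : s ≤ t) : s.sum ≤ t.sum := by
  obtain ⟨u, rfl⟩ := Multiset.le_iff_exists_add.mp h
  simp

private lemma mem_msum {a : ℕ} {S : Multiset (Multiset ℕ)} : a ∈ S.sum ↔ ∃ s ∈ S, a ∈ s :=
  Multiset.mem_join

private lemma sum_univ_get' (l : List ℕ) : ∑ j, l.get j = l.sum := by
  rw [Finset.sum_eq_multiset_sum, Fin.univ_val_map, List.ofFn_get]
  exact Multiset.sum_coe l

private lemma sum_finset_le_filter_sum (l : List ℕ) (F : Finset (Fin l.length))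
    (p : ℕ → Prop) [DecidablePred p] (hp : ∀ j ∈ F, p (l.get j)) :
    ∑ j ∈ F, l.get j ≤ ((↑l : Multiset ℕ).filter p).sum := by
  rw [Finset.sum_eq_multiset_sum]
  apply msum_le_msum
  rw [Multiset.le_filter]
  refine ⟨?_, ?_⟩
  · have h1 : (↑l : Multiset ℕ) = Multiset.map l.get (Finset.univ : Finset (Fin l.length)).val := by
      rw [Fin.univ_val_map, List.ofFn_get]
    rw [h1]
    exact Multiset.map_le_map (Finset.val_le_iff.mpr (F.subset_univ))
  · intro a ha
    obtain ⟨j, hj, rfl⟩ := Multiset.mem_map.mp ha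
    exact hp j hj

/-- the greedy placement never gets stuck.  If a prefix
`λ_1, …, λ_m` (0-indexed: indices `< m`) has been placed into the sums for the
parts of `γ` without exceeding them, then the next part `λ_{m+1}` (0-indexed
`lam.get ⟨m, _⟩`) still fits in some sum. -/
theorem greedy_placement_never_stuck (n k : ℕ) (hn : 1 ≤ n) (hk : 1 ≤ k)
    (lam : List ℕ) (hlam_sorted : lam.Pairwise (· ≥ ·))
    (hlam_part : IsPartition n (↑lam : Multiset ℕ))
    (hlam_gen : GeneratesAll n k (↑lam : Multiset ℕ))
    (γ : List ℕ) (hγ_sorted : γ.Pairwise (· ≥ ·))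
    (hγ_part : IsPartition n (↑γ : Multiset ℕ))
    (hγ_card : γ.length ≤ k)
    (m : ℕ) (hm : m < lam.length)
    (S : Fin γ.length → Finset (Fin lam.length))
    (hdisj : ∀ i i', i ≠ i' → Disjoint (S i) (S i'))
    (hprefix : ∀ j : Fin lam.length, (∃ i, j ∈ S i) ↔ (j : ℕ) < m)
    (hfits : ∀ i : Fin γ.length, ∑ j ∈ S i, lam.get j ≤ γ.get i) :
    ∃ i : Fin γ.length, (∑ j ∈ S i, lam.get j) + lam.get ⟨m, hm⟩ ≤ γ.get i := by
  by_contra hcon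
  push_neg at hcon
  set a := lam.get ⟨m, hm⟩ with ha_def
  have hapos : 0 < a := hlam_part.1 a (Multiset.mem_coe.mpr (lam.get_mem _))
  -- prefix sum and tail sum
  set Pm : ℕ := ∑ j ∈ Finset.univ.filter (fun j : Fin lam.length => (j : ℕ) < m), lam.get j
    with hPm_def
  set R : ℕ := ∑ j ∈ Finset.univ.filter (fun j : Fin lam.length => ¬ (j : ℕ) < m), lam.get j
    with hR_def
  have hPR : Pm + R = n := by
    rw [hPm_def, hR_def, Finset.sum_filter_add_sum_filter_not, sum_univ_get']
    have := hlam_part.2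
    rwa [Multiset.sum_coe] at this
  have haR : a ≤ R := by
    rw [hR_def]
    exact Finset.single_le_sum (f := fun j : Fin lam.length => lam.get j)
      (fun _ _ => Nat.zero_le _) (by simp)
  -- sum of the s_i equals Pm
  have hbiUnion : Finset.univ.biUnion S
      = Finset.univ.filter (fun j : Fin lam.length => (j : ℕ) < m) := by
    ext j
    simp only [Finset.mem_biUnion, Finset.mem_filter, Finset.mem_univ, true_and]
    exact hprefix j
  have hS : ∑ i : Fin γ.length, ∑ j ∈ S i, lam.get j = Pm := by
    rw [← Finset.sum_biUnion, hbiUnion]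
    intro i _ i' _ hne
    exact hdisj i i' hne
  -- γ sums to n
  have hγsum : ∑ i : Fin γ.length, γ.get i = n := by
    rw [sum_univ_get']
    have := hγ_part.2
    rwa [Multiset.sum_coe] at this
  -- deficiency bound
  have hnp : n + γ.length ≤ Pm + γ.length * a := by
    calc n + γ.length = ∑ i : Fin γ.length, (γ.get i + 1) := by
          rw [Finset.sum_add_distrib, hγsum]; simp
      _ ≤ ∑ i : Fin γ.length, ((∑ j ∈ S i, lam.get j) + a) :=
          Finset.sum_le_sum (fun i _ => by have := hcon i; omega)
      _ = Pm + γ.length * a := by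
          rw [Finset.sum_add_distrib, hS]
          simp [Finset.card_univ, mul_comm]
  set c : ℕ := a - 1 with hc_def
  have hac : a = c + 1 := by omega
  have hRpc : R ≤ γ.length * c := by
    have h1 : γ.length * a = γ.length * c + γ.length := by
      rw [hac, Nat.mul_succ]
    omega
  have hRkc : R ≤ k * c := hRpc.trans (Nat.mul_le_mul_right c hγ_card)
  have hc1 : 1 ≤ c := by
    rcases Nat.eq_zero_or_pos c with h | h
    · rw [h, Nat.mul_zero] at hRkc; omega
    · exact h
  -- the adversarial partition
  set t : ℕ := min (k - 1) ((n - 1) / c) with ht_def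
  have htdiv : t * c ≤ n - 1 := by
    calc t * c ≤ ((n - 1) / c) * c := Nat.mul_le_mul_right c (min_le_right _ _)
      _ ≤ n - 1 := Nat.div_mul_le_self _ _
  have hL1 : 1 ≤ n - t * c := by omega
  set L : ℕ := n - t * c with hL_def
  have hLtc : L + t * c = n := by omega
  have htk : t + 1 ≤ k := by
    have := min_le_left (k - 1) ((n - 1) / c)
    omega
  have hν : IsPartition n (L ::ₘ Multiset.replicate t c) := by
    constructor
    · intro x hx
      rcases Multiset.mem_cons.mp hx with rfl | hx
      · omega
      · rw [Multiset.eq_of_mem_replicate hx]; omega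
    · rw [Multiset.sum_cons, Multiset.sum_replicate, smul_eq_mul]; omega
  have hνcard : Multiset.card (L ::ₘ Multiset.replicate t c) ≤ k := by
    rw [Multiset.card_cons, Multiset.card_replicate]; omega
  obtain ⟨Q, hQsum, hQmap⟩ := hlam_gen _ hν hνcard
  rcases le_or_gt L c with hLc | hLc
  · -- all bins small: the part a doesn't fit anywhere
    have hamem : a ∈ Q.sum := by
      rw [hQsum]
      exact Multiset.mem_coe.mpr (lam.get_mem _)
    obtain ⟨B, hBQ, haB⟩ := mem_msum.mp hamem
    have h1 : a ≤ B.sum := Multiset.le_sum_of_mem haB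
    have h2 : B.sum ∈ Q.map Multiset.sum := Multiset.mem_map_of_mem _ hBQ
    rw [hQmap] at h2
    rcases Multiset.mem_cons.mp h2 with h | h
    · omega
    · have := Multiset.eq_of_mem_replicate h; omega
  · -- one big bin: big parts all fit in it
    have ht : t = k - 1 := by
      rcases le_total (k - 1) ((n - 1) / c) with h | h
      · rw [ht_def, min_eq_left h]
      · exfalso
        have ht2 : t = (n - 1) / c := by rw [ht_def, min_eq_right h]
        set q := (n - 1) / c with hq_def
        have h1 : c * q + (n - 1) % c = n - 1 := Nat.div_add_mod _ _
        have h2 : (n - 1) % c < c := Nat.mod_lt _ (by omega)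
        have h3 : L = n - c * q := by rw [hL_def, ht2, mul_comm]
        set X := c * q with hX_def
        omega
    -- the big bin
    obtain ⟨B₀, hB₀Q, hB₀sum⟩ : ∃ B ∈ Q, B.sum = L := by
      have : L ∈ Q.map Multiset.sum := by
        rw [hQmap]; exact Multiset.mem_cons_self _ _
      obtain ⟨B, hB, hBsum⟩ := Multiset.mem_map.mp this
      exact ⟨B, hB, hBsum⟩
    have hQ2 : (Q.erase B₀).map Multiset.sum = Multiset.replicate t c := by
      have h := hQmap
      rw [← Multiset.cons_erase hB₀Q, Multiset.map_cons, hB₀sum] at h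
      exact (Multiset.cons_inj_right _).mp h
    have hQsplit : (↑lam : Multiset ℕ) = B₀ + (Q.erase B₀).sum := by
      rw [← hQsum]
      conv_lhs => rw [← Multiset.cons_erase hB₀Q]
      rw [Multiset.sum_cons]
    have hsmall : ∀ x ∈ (Q.erase B₀).sum, ¬ c < x := by
      intro x hx
      obtain ⟨C, hC, hxC⟩ := mem_msum.mp hx
      have h1 : x ≤ C.sum := Multiset.le_sum_of_mem hxC
      have h2 : C.sum = c := Multiset.eq_of_mem_replicate
        (by rw [← hQ2]; exact Multiset.mem_map_of_mem _ hC)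
      omega
    set bigA : ℕ := ((↑lam : Multiset ℕ).filter (fun x => c < x)).sum with hbigA_def
    have hupper : bigA ≤ L := by
      calc bigA = (B₀.filter (fun x => c < x)).sum
            + ((Q.erase B₀).sum.filter (fun x => c < x)).sum := by
            rw [hbigA_def, hQsplit, Multiset.filter_add, Multiset.sum_add]
        _ = (B₀.filter (fun x => c < x)).sum := by
            rw [Multiset.filter_eq_nil.mpr hsmall]; simp
        _ ≤ B₀.sum := msum_le_msum (Multiset.filter_le _ _)
        _ = L := hB₀sum
    have hlower : Pm + a ≤ bigA := by
      have hins : Finset.univ.filter (fun j : Fin lam.length => (j : ℕ) < m + 1)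
          = insert ⟨m, hm⟩ (Finset.univ.filter (fun j : Fin lam.length => (j : ℕ) < m)) := by
        ext j
        simp only [Finset.mem_filter, Finset.mem_univ, true_and, Finset.mem_insert,
          Fin.ext_iff]
        omega
      have hFP : ∑ j ∈ Finset.univ.filter (fun j : Fin lam.length => (j : ℕ) < m + 1),
          lam.get j = Pm + a := by
        rw [hins, Finset.sum_insert (by simp)]
        omega
      rw [← hFP, hbigA_def]
      apply sum_finset_le_filter_sum
      intro j hj
      simp only [Finset.mem_filter, Finset.mem_univ, true_and] at hj
      have hja : a ≤ lam.get j := by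
        rcases Nat.lt_or_ge (j : ℕ) m with h | h
        · exact hlam_sorted.rel_get_of_lt (by
            show (j : ℕ) < (⟨m, hm⟩ : Fin lam.length); exact h)
        · have : (j : ℕ) = m := by omega
          have : j = ⟨m, hm⟩ := Fin.ext this
          rw [this]
      omega
    -- final contradiction
    have hfin : Pm + a ≤ L := hlower.trans hupper
    have h5 : t * c = k * c - c := by rw [ht, Nat.sub_one_mul]
    have h6 : c ≤ k * c := Nat.le_mul_of_pos_left c hk
    set Y := k * c with hY_def
    omega
end

section
/- Let n ≥ 1 and k ≥ 1 be integers, let λ = (λ_1 ≥ λ_2 ≥ ⋯ ≥ λ_l) be a partition of n that generates all k-partitions of n, and let γ = (γ_1 ≥ ⋯ ≥ γ_p) be a partition of n with p ≤ k. Then there exists a generation of γ by λ in which the largest part λ_1 is placed in the sum generating the largest part γ_1; that is, there exist pairwise disjoint sets S_1, …, S_p partitioning {1, …, l} with 1 ∈ S_1 and Σ_{j ∈ S_i} λ_j = γ_i for every i. -/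
namespace Gen5Aux

/-- filtering distributes over a sum (join) of multisets -/
lemma filter_join_sum (p : ℕ → Prop) [DecidablePred p] (P : Multiset (Multiset ℕ)) :
    ((P.sum.filter p).sum : ℕ) = (P.map (fun B => (B.filter p).sum)).sum := by
  induction P using Multiset.induction_on with
  | empty => simp
  | cons a s ih => simp [Multiset.filter_add, ih]

lemma sum_le_sum_of_le {s t : Multiset ℕ} (h : s ≤ t) : s.sum ≤ t.sum := by
  obtain ⟨u, rfl⟩ := Multiset.le_iff_exists_add.mp h
  simp

/-- arithmetic helper: decompose `R` into at most `k` parts bounded by `b = ⌈R/k⌉`. -/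
lemma arith (k R : ℕ) (hk : 1 ≤ k) (hR : 1 ≤ R) :
    ∃ b t s : ℕ, 1 ≤ b ∧ k * b ≤ R + (k - 1) ∧ 1 ≤ s ∧ s ≤ b ∧ t + 1 ≤ k ∧
      s + t * b = R := by
  have hk0 : 0 < k := hk
  set b := (R + k - 1) / k with hbdef
  have hb1 : 1 ≤ b := by
    rw [hbdef]
    exact (Nat.one_le_div_iff hk0).mpr (by omega)
  have hub : k * b ≤ R + (k - 1) := by
    have h := Nat.div_mul_le_self (R + k - 1) k
    calc k * b = b * k := Nat.mul_comm _ _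
      _ ≤ R + k - 1 := h
      _ = R + (k - 1) := by omega
  have hlb : R ≤ k * b := by
    have h1 := Nat.div_add_mod (R + k - 1) k
    have h2 : (R + k - 1) % k < k := Nat.mod_lt _ hk0
    rw [← hbdef] at h1
    have h3 : R + k - 1 = R + (k - 1) := by omega
    rw [h3] at h1 h2
    have h4 : (R + (k - 1)) % k ≤ k - 1 := by omega
    linarith [h1, h4]
  have hbpos : 0 < b := hb1
  set t := (R - 1) / b with htdef
  set s := (R - 1) % b + 1 with hsdef
  refine ⟨b, t, s, hb1, hub, by omega, ?_, ?_, ?_⟩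
  · have := Nat.mod_lt (R - 1) hbpos
    omega
  · -- t + 1 ≤ k : since t = (R-1)/b and R - 1 < R ≤ k*b
    have ht : t < k := by
      rw [htdef]
      rw [Nat.div_lt_iff_lt_mul hbpos]
      calc R - 1 < R := by omega
        _ ≤ k * b := hlb
    omega
  · have h1 := Nat.div_add_mod (R - 1) b
    rw [← htdef] at h1
    -- h1 : b * t + (R-1) % b = R - 1
    have : s + t * b = b * t + (R - 1) % b + 1 := by rw [hsdef]; ring
    rw [this, h1]
    omega

/-- Necessity: if `lam` generates all `k`-partitions of its sum, then each part
satisfies `k * lam[i] ≤ (tail sum from i) + (k-1)`. -/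
lemma nec (k : ℕ) (hk : 1 ≤ k) (lam : List ℕ) (hsorted : lam.Pairwise (· ≥ ·))
    (hpos : ∀ x ∈ lam, 0 < x)
    (hgen : GeneratesAll lam.sum k (↑lam : Multiset ℕ)) :
    ∀ i (hi : i < lam.length),
      k * lam.get ⟨i, hi⟩ ≤ (lam.drop i).sum + (k - 1) := by
  intro i hi
  by_contra hcon
  push_neg at hcon
  set n := lam.sum with hn
  set H := (lam.take i).sum with hH
  set R := (lam.drop i).sum with hR
  set a := lam.get ⟨i, hi⟩ with ha
  have hHR : H + R = n := List.sum_take_add_sum_drop lam i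
  have hdrop : lam.drop i = a :: lam.drop (i + 1) := by
    rw [ha, List.get_eq_getElem]
    exact List.drop_eq_getElem_cons hi
  have haR : a ≤ R := by
    rw [hR, hdrop, List.sum_cons]; omega
  have hapos : 0 < a := hpos _ (lam.get_mem _)
  have hR1 : 1 ≤ R := le_trans hapos haR
  obtain ⟨b, t, s, hb1, hub, hs1, hsb, htk, hstR⟩ := arith k R hk hR1
  have hba : b < a := by
    have : k * b < k * a := by omega
    exact Nat.lt_of_mul_lt_mul_left this
  -- the test partition ξ
  set ξ : List ℕ := (H + s) :: List.replicate t b with hξ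
  have hξsum : ξ.sum = n := by
    rw [hξ, List.sum_cons, List.sum_replicate, smul_eq_mul]
    omega
  have hξpart : IsPartition n (↑ξ : Multiset ℕ) := by
    constructor
    · intro x hx
      rw [Multiset.mem_coe, hξ, List.mem_cons] at hx
      rcases hx with rfl | hx
      · omega
      · rw [List.eq_of_mem_replicate hx]; omega
    · rw [Multiset.sum_coe, hξsum]
  have hξcard : Multiset.card (↑ξ : Multiset ℕ) ≤ k := by
    rw [Multiset.coe_card, hξ, List.length_cons, List.length_replicate]
    omega
  obtain ⟨P, hP1, hP2⟩ := hgen (↑ξ) hξpart hξcard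
  -- T = big elements of lam
  set T : Multiset ℕ := (↑lam : Multiset ℕ).filter (fun x => b < x) with hT
  -- lower bound on T.sum
  have htake_le : (↑(lam.take (i + 1)) : Multiset ℕ) ≤ T := by
    rw [hT]
    rw [Multiset.le_filter]
    constructor
    · exact Multiset.coe_le.mpr (List.Sublist.subperm (List.take_sublist _ _))
    · intro x hx
      rw [Multiset.mem_coe] at hx
      obtain ⟨j, hj, rfl⟩ := List.mem_iff_getElem.mp hx
      have hjlen : j < lam.length := lt_of_lt_of_le hj (by
        simpa using List.length_take_le (i+1) lam)
      rw [List.getElem_take]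
      have hji : j ≤ i := by
        have := hj
        simp [List.length_take] at this
        omega
      have hle : lam.get ⟨i, hi⟩ ≤ lam.get ⟨j, hjlen⟩ := by
        haveI : IsRefl ℕ (· ≥ ·) := ⟨fun a => le_refl a⟩
        exact hsorted.rel_get_of_le (by simpa using hji)
      have hale : a ≤ lam.get ⟨j, hjlen⟩ := by rw [ha]; exact hle
      exact lt_of_lt_of_le hba hale
  have hTlow : H + a ≤ T.sum := by
    have h1 : ((↑(lam.take (i + 1)) : Multiset ℕ)).sum = H + a := by
      rw [Multiset.sum_coe]
      rw [ha, hH]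
      exact List.sum_take_succ lam i hi
    calc H + a = ((↑(lam.take (i + 1)) : Multiset ℕ)).sum := h1.symm
      _ ≤ T.sum := sum_le_sum_of_le htake_le
  -- upper bound on T.sum
  have hThigh : T.sum ≤ H + s := by
    have h1 : T.sum = (P.map (fun B => (B.filter (fun x => b < x)).sum)).sum := by
      rw [hT, ← hP1]
      exact filter_join_sum _ P
    have h2 : ∀ B ∈ P, (B.filter (fun x => b < x)).sum
        ≤ (fun v => if b < v then v else 0) B.sum := by
      intro B _
      by_cases hB : b < B.sum
      · simp only [if_pos hB]
        exact sum_le_sum_of_le (Multiset.filter_le _ B)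
      · simp only [if_neg hB]
        push_neg at hB
        have : B.filter (fun x => b < x) = 0 := by
          rw [Multiset.filter_eq_nil]
          intro x hx
          have := Multiset.single_le_sum (fun y _ => Nat.zero_le y) x hx
          omega
        rw [this]; simp
    have h3 : (P.map (fun B => (B.filter (fun x => b < x)).sum)).sum
        ≤ (P.map (fun B => (fun v => if b < v then v else 0) B.sum)).sum :=
      Multiset.sum_map_le_sum_map _ _ h2
    have h4 : (P.map (fun B => (fun v => if b < v then v else 0) B.sum))
        = (P.map Multiset.sum).map (fun v => if b < v then v else 0) := by
      rw [Multiset.map_map]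
      rfl
    have h6 : ((↑ξ : Multiset ℕ).map (fun v => if b < v then v else 0)).sum
        ≤ H + s := by
      rw [Multiset.map_coe, Multiset.sum_coe]
      rw [hξ, List.map_cons, List.sum_cons]
      have hrep : (List.replicate t b).map (fun v => if b < v then v else 0)
          = List.replicate t 0 := by
        rw [List.map_replicate, if_neg (lt_irrefl b)]
      rw [hrep, List.sum_replicate]
      simp only [smul_zero, add_zero]
      split <;> omega
    rw [h1]
    refine le_trans h3 ?_
    rw [h4, hP2]
    exact h6
  omega

/-- Sufficiency (indexed form): if each part of `lam` satisfies the ceiling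
condition, then any target function `g` on `Fin p` (`p ≤ k`) with matching total
admits an indexed generation. -/
lemma main (k : ℕ) (hk : 1 ≤ k) :
    ∀ (lam : List ℕ), (∀ x ∈ lam, 0 < x) →
    (∀ i (hi : i < lam.length), k * lam.get ⟨i, hi⟩ ≤ (lam.drop i).sum + (k - 1)) →
    ∀ (p : ℕ), p ≤ k → ∀ (g : Fin p → ℕ), (∑ i, g i) = lam.sum →
    ∃ S : Fin p → Finset (Fin lam.length),
      (∀ i i', i ≠ i' → Disjoint (S i) (S i')) ∧
      (∀ j : Fin lam.length, ∃ i, j ∈ S i) ∧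
      (∀ i, ∑ j ∈ S i, lam.get j = g i) := by
  intro lam
  induction lam with
  | nil =>
    intro _ _ p hp g hsum
    refine ⟨fun _ => ∅, fun _ _ _ => Finset.disjoint_empty_left _, ?_, ?_⟩
    · intro j; exact absurd j.2 (by simp)
    · intro i
      simp only [Finset.sum_empty]
      have : ∀ i' ∈ Finset.univ, (0:ℕ) ≤ g i' := fun _ _ => Nat.zero_le _
      have hgle := Finset.single_le_sum this (Finset.mem_univ i)
      simp only [List.sum_nil] at hsum
      omega
  | cons a t ih =>
    intro hpos hC p hp g hsum
    have hapos : 0 < a := hpos a List.mem_cons_self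
    have hppos : 0 < p := by
      by_contra h
      push_neg at h
      interval_cases p
      simp [List.sum_cons] at hsum
      omega
    -- maximal index
    obtain ⟨i₀, -, hmax⟩ := Finset.exists_max_image (Finset.univ : Finset (Fin p)) g
      ⟨⟨0, hppos⟩, Finset.mem_univ _⟩
    have hsum_le : (a :: t).sum ≤ p * g i₀ := by
      rw [← hsum]
      calc ∑ i, g i ≤ ∑ _i : Fin p, g i₀ :=
            Finset.sum_le_sum (fun i _ => hmax i (Finset.mem_univ i))
        _ = p * g i₀ := by simp [Finset.sum_const, mul_comm]
    have hfull : (a :: t).sum ≤ k * g i₀ :=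
      le_trans hsum_le (Nat.mul_le_mul_right _ hp)
    have h0 := hC 0 (by simp)
    simp only [List.get_eq_getElem, List.getElem_cons_zero, List.drop_zero] at h0
    -- a ≤ g i₀
    have hag : a ≤ g i₀ := by
      have h1 : k * a < k * (g i₀ + 1) := by
        have : k * (g i₀ + 1) = k * g i₀ + k := by ring
        omega
      have := Nat.lt_of_mul_lt_mul_left h1
      omega
    -- recursive target
    set g' : Fin p → ℕ := Function.update g i₀ (g i₀ - a) with hg'
    have hsum' : (∑ i, g' i) = t.sum := by
      rw [hg', Finset.sum_update_of_mem (Finset.mem_univ i₀)]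
      have h2 : ∑ i, g i = g i₀ + ∑ i ∈ Finset.univ \ {i₀}, g i := by
        rw [← Finset.sum_eq_add_sum_sdiff_singleton_of_mem (Finset.mem_univ i₀)]
      simp only [List.sum_cons] at hsum
      omega
    have hC' : ∀ i (hi : i < t.length), k * t.get ⟨i, hi⟩ ≤ (t.drop i).sum + (k - 1) := by
      intro i hi
      have := hC (i + 1) (by simpa using Nat.succ_lt_succ hi)
      simpa using this
    obtain ⟨S', hdisj', hcov', hsum''⟩ :=
      ih (fun x hx => hpos x (List.mem_cons_of_mem a hx)) hC' p hp g' hsum'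
    -- embed
    set e : Fin t.length ↪ Fin (a :: t).length :=
      ⟨Fin.succ, Fin.succ_injective _⟩ with he
    set S : Fin p → Finset (Fin (a :: t).length) :=
      fun i => if i = i₀ then insert (⟨0, Nat.succ_pos t.length⟩ : Fin (a :: t).length) ((S' i).map e)
               else (S' i).map e with hS
    have hzero_notmem : ∀ i,
        (⟨0, Nat.succ_pos t.length⟩ : Fin (a :: t).length) ∉ (S' i).map e := by
      intro i h
      obtain ⟨x, -, hx⟩ := Finset.mem_map.mp h
      exact Fin.succ_ne_zero x hx
    refine ⟨S, ?_, ?_, ?_⟩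
    · intro i i' hne
      have hmapdisj : Disjoint ((S' i).map e) ((S' i').map e) :=
        (Finset.disjoint_map e).mpr (hdisj' i i' hne)
      rw [hS]
      by_cases h1 : i = i₀ <;> by_cases h2 : i' = i₀
      · exact absurd (h1.trans h2.symm) hne
      · simp only [if_pos h1, if_neg h2]
        rw [Finset.disjoint_insert_left]
        exact ⟨hzero_notmem i', hmapdisj⟩
      · simp only [if_neg h1, if_pos h2]
        rw [Finset.disjoint_insert_right]
        exact ⟨hzero_notmem i, hmapdisj⟩
      · simp only [if_neg h1, if_neg h2]
        exact hmapdisj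
    · intro j
      refine Fin.cases ?_ ?_ j
      · exact ⟨i₀, by simp [hS]⟩
      · intro j'
        obtain ⟨i, hi⟩ := hcov' j'
        refine ⟨i, ?_⟩
        have hmem : (e j' : Fin (a :: t).length) ∈ (S' i).map e :=
          Finset.mem_map_of_mem e hi
        rw [hS]
        by_cases h1 : i = i₀
        · simp only [if_pos h1]
          exact Finset.mem_insert_of_mem hmem
        · simp only [if_neg h1]
          exact hmem
    · intro i
      have hmapsum : ∑ j ∈ (S' i).map e, (a :: t).get j = ∑ x ∈ S' i, t.get x := by
        rw [Finset.sum_map]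
        apply Finset.sum_congr rfl
        intro x _
        rfl
      rw [hS]
      by_cases h1 : i = i₀
      · simp only [if_pos h1]
        rw [Finset.sum_insert (hzero_notmem i)]
        rw [hmapsum, hsum'' i, h1]
        have : (a :: t).get (⟨0, Nat.succ_pos t.length⟩ : Fin (a :: t).length) = a := rfl
        rw [this, hg', Function.update_self]
        omega
      · simp only [if_neg h1]
        rw [hmapsum, hsum'' i, hg', Function.update_of_ne h1]

end Gen5Aux

/-- if `lam` generates all `k`-partitions of `n` and `γ` is a
partition of `n` with at most `k` parts (both listed in decreasing order), then
`γ` can be generated by `lam` with the largest part `λ_1` placed in the sum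
generating the largest part `γ_1`. -/
theorem generation_with_largest_in_largest (n k : ℕ) (hn : 1 ≤ n) (hk : 1 ≤ k)
    (lam : List ℕ) (hlam_sorted : lam.Pairwise (· ≥ ·))
    (hlam_part : IsPartition n (↑lam : Multiset ℕ))
    (hlam_gen : GeneratesAll n k (↑lam : Multiset ℕ))
    (hl : 0 < lam.length)
    (γ : List ℕ) (hγ_sorted : γ.Pairwise (· ≥ ·))
    (hγ_part : IsPartition n (↑γ : Multiset ℕ))
    (hγ_card : γ.length ≤ k) (hp : 0 < γ.length) :
    ∃ S : Fin γ.length → Finset (Fin lam.length),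
      (∀ i i', i ≠ i' → Disjoint (S i) (S i')) ∧
      (∀ j : Fin lam.length, ∃ i, j ∈ S i) ∧
      (⟨0, hl⟩ : Fin lam.length) ∈ S ⟨0, hp⟩ ∧
      (∀ i : Fin γ.length, ∑ j ∈ S i, lam.get j = γ.get i) := by
  obtain ⟨a, t, rfl⟩ : ∃ a t, lam = a :: t := by
    cases lam with
    | nil => simp at hl
    | cons a t => exact ⟨a, t, rfl⟩
  have hlam_pos : ∀ x ∈ (a :: t), 0 < x := by
    intro x hx; exact hlam_part.1 x (by simpa using hx)
  have hlamsum : (a :: t).sum = n := by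
    have := hlam_part.2; simpa using this
  have hγsum : γ.sum = n := by
    have := hγ_part.2; simpa using this
  have hgen' : GeneratesAll (a :: t).sum k (↑(a :: t) : Multiset ℕ) := by
    rw [hlamsum]; exact hlam_gen
  have hC := Gen5Aux.nec k hk (a :: t) hlam_sorted hlam_pos hgen'
  have hapos : 0 < a := hlam_pos a List.mem_cons_self
  -- a ≤ γ.get ⟨0, hp⟩
  set p := γ.length with hpdef
  have hγ0_max : ∀ i : Fin p, γ.get i ≤ γ.get ⟨0, hp⟩ := by
    intro i
    haveI : IsRefl ℕ (· ≥ ·) := ⟨fun a => le_refl a⟩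
    exact hγ_sorted.rel_get_of_le (by rw [Fin.le_def]; exact Nat.zero_le _)
  have hγsum_fin : ∑ i : Fin p, γ.get i = n := by
    rw [← hγsum]
    simp only [List.get_eq_getElem]
    exact Fin.sum_univ_getElem γ
  have hγ0_big : n ≤ k * γ.get ⟨0, hp⟩ := by
    calc n = ∑ i : Fin p, γ.get i := hγsum_fin.symm
      _ ≤ ∑ _i : Fin p, γ.get ⟨0, hp⟩ := Finset.sum_le_sum (fun i _ => hγ0_max i)
      _ = p * γ.get ⟨0, hp⟩ := by simp [Finset.sum_const, mul_comm]
      _ ≤ k * γ.get ⟨0, hp⟩ := Nat.mul_le_mul_right _ hγ_card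
  have h0 := hC 0 (by simp)
  simp only [List.get_eq_getElem, List.getElem_cons_zero, List.drop_zero] at h0
  rw [hlamsum] at h0
  have hag : a ≤ γ.get ⟨0, hp⟩ := by
    have h1 : k * a < k * (γ.get ⟨0, hp⟩ + 1) := by
      have : k * (γ.get ⟨0, hp⟩ + 1) = k * γ.get ⟨0, hp⟩ + k := by ring
      omega
    have := Nat.lt_of_mul_lt_mul_left h1
    omega
  -- target for the tail
  set g : Fin p → ℕ := Function.update (fun i => γ.get i) ⟨0, hp⟩ (γ.get ⟨0, hp⟩ - a)
    with hg
  have hsum' : (∑ i, g i) = t.sum := by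
    rw [hg, Finset.sum_update_of_mem (Finset.mem_univ _)]
    have h2 : ∑ i : Fin p, γ.get i
        = γ.get ⟨0, hp⟩ + ∑ i ∈ Finset.univ \ {(⟨0, hp⟩ : Fin p)}, γ.get i := by
      rw [← Finset.sum_eq_add_sum_sdiff_singleton_of_mem (Finset.mem_univ _)]
    have h3 : (a :: t).sum = a + t.sum := by simp
    omega
  have hC' : ∀ i (hi : i < t.length), k * t.get ⟨i, hi⟩ ≤ (t.drop i).sum + (k - 1) := by
    intro i hi
    have := hC (i + 1) (by simpa using Nat.succ_lt_succ hi)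
    simpa using this
  have htpos : ∀ x ∈ t, 0 < x := fun x hx => hlam_pos x (List.mem_cons_of_mem a hx)
  obtain ⟨S', hdisj', hcov', hsum''⟩ :=
    Gen5Aux.main k hk t htpos hC' p hγ_card g hsum'
  set e : Fin t.length ↪ Fin (a :: t).length := ⟨Fin.succ, Fin.succ_injective _⟩ with he
  set S : Fin p → Finset (Fin (a :: t).length) :=
    fun i => if i = ⟨0, hp⟩ then insert (⟨0, hl⟩ : Fin (a :: t).length) ((S' i).map e)
             else (S' i).map e with hS
  have hzero_eq : (⟨0, hl⟩ : Fin (a :: t).length) = (0 : Fin (t.length + 1)) := rfl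
  have hzero_notmem : ∀ i, (⟨0, hl⟩ : Fin (a :: t).length) ∉ (S' i).map e := by
    intro i h
    obtain ⟨x, -, hx⟩ := Finset.mem_map.mp h
    rw [hzero_eq] at hx
    exact Fin.succ_ne_zero x hx
  refine ⟨S, ?_, ?_, ?_, ?_⟩
  · intro i i' hne
    have hmapdisj : Disjoint ((S' i).map e) ((S' i').map e) :=
      (Finset.disjoint_map e).mpr (hdisj' i i' hne)
    rw [hS]
    by_cases h1 : i = ⟨0, hp⟩ <;> by_cases h2 : i' = ⟨0, hp⟩
    · exact absurd (h1.trans h2.symm) hne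
    · simp only [if_pos h1, if_neg h2]
      rw [Finset.disjoint_insert_left]
      exact ⟨hzero_notmem i', hmapdisj⟩
    · simp only [if_neg h1, if_pos h2]
      rw [Finset.disjoint_insert_right]
      exact ⟨hzero_notmem i, hmapdisj⟩
    · simp only [if_neg h1, if_neg h2]
      exact hmapdisj
  · intro j
    refine Fin.cases ?_ ?_ j
    · exact ⟨⟨0, hp⟩, by simp [hS]⟩
    · intro j'
      obtain ⟨i, hi⟩ := hcov' j'
      refine ⟨i, ?_⟩
      have hmem : (e j' : Fin (a :: t).length) ∈ (S' i).map e :=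
        Finset.mem_map_of_mem e hi
      rw [hS]
      by_cases h1 : i = ⟨0, hp⟩
      · simp only [if_pos h1]
        exact Finset.mem_insert_of_mem hmem
      · simp only [if_neg h1]
        exact hmem
  · rw [hS]
    simp only [if_pos rfl]
    exact Finset.mem_insert_self _ _
  · intro i
    have hmapsum : ∑ j ∈ (S' i).map e, (a :: t).get j = ∑ x ∈ S' i, t.get x := by
      rw [Finset.sum_map]
      apply Finset.sum_congr rfl
      intro x _
      rfl
    rw [hS]
    by_cases h1 : i = ⟨0, hp⟩
    · simp only [if_pos h1]
      rw [Finset.sum_insert (hzero_notmem i)]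
      rw [hmapsum, hsum'' i, h1]
      have ha0 : (a :: t).get (⟨0, hl⟩ : Fin (a :: t).length) = a := rfl
      rw [ha0, hg, Function.update_self]
      omega
    · simp only [if_neg h1]
      rw [hmapsum, hsum'' i, hg, Function.update_of_ne h1]
end

section
/- Let n ≥ 1 and k ≥ 1 be integers, and let μ = (μ_1 ≥ μ_2 ≥ ⋯) be the greedy partition of n defined by μ_1 = ⌈n/k⌉ and μ_i = ⌈(n − Σ_{j<i} μ_j)/k⌉ for i > 1 (stopping when the remainder reaches 0). If λ = (λ_1 ≥ λ_2 ≥ ⋯ ≥ λ_l) is any partition of n that generates all k-partitions of n, then for every m ∈ {1, …, min(|μ|, l)} it holds that Σ_{i=1}^m λ_i ≤ Σ_{i=1}^m μ_i. -/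
lemma greedy_cons (k n : ℕ) (hk : k ≠ 0) :
    greedyList k (n+1) = (n + k) / k :: greedyList k (n + 1 - (n + k) / k) := by
  rw [greedyList]; simp [hk]

lemma greedy_q_facts (k n : ℕ) (hk : k ≠ 0) :
    1 ≤ (n + k) / k ∧ (n + k) / k ≤ n + 1 ∧ n + 1 ≤ k * ((n + k) / k) := by
  have hkpos : 0 < k := Nat.pos_of_ne_zero hk
  have h1 : 1 ≤ (n + k) / k :=
    (Nat.one_le_div_iff hkpos).mpr (Nat.le_add_left k n)
  have h2 : (n + k) / k ≤ n + 1 := by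
    have hle : n + k ≤ (n + 1) * k := by nlinarith
    calc (n + k) / k ≤ ((n + 1) * k) / k := Nat.div_le_div_right hle
      _ = n + 1 := Nat.mul_div_cancel _ hkpos
  have h3 : n + 1 ≤ k * ((n + k) / k) := by
    have hd := Nat.div_add_mod (n + k) k
    have hm : (n + k) % k < k := Nat.mod_lt _ hkpos
    omega
  exact ⟨h1, h2, h3⟩

lemma greedy_sum (k : ℕ) (hk : k ≠ 0) : ∀ n, (greedyList k n).sum = n := by
  intro n
  induction n using Nat.strong_induction_on with
  | _ n ih =>
    match n with
    | 0 => simp [greedyList]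
    | n + 1 =>
      obtain ⟨h1, h2, _⟩ := greedy_q_facts k n hk
      rw [greedy_cons k n hk, List.sum_cons, ih _ (by omega)]
      omega

lemma greedy_spec (k : ℕ) (hk : k ≠ 0) : ∀ n, ∀ i (h : i < (greedyList k n).length),
    1 ≤ (greedyList k n).get ⟨i, h⟩ ∧
    n ≤ ((greedyList k n).take (i+1)).sum + (k-1) * (greedyList k n).get ⟨i, h⟩ := by
  intro n
  induction n using Nat.strong_induction_on with
  | _ n ih =>
    match n with
    | 0 => intro i h; simp [greedyList] at h
    | n + 1 =>
      obtain ⟨h1, h2, h3⟩ := greedy_q_facts k n hk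
      rw [greedy_cons k n hk]
      intro i h
      match i with
      | 0 =>
        refine ⟨h1, ?_⟩
        show n + 1 ≤ (List.take 1 ((n + k) / k :: greedyList k (n + 1 - (n + k) / k))).sum +
          (k - 1) * ((n + k) / k)
        simp only [List.take_succ_cons, List.take_zero, List.sum_cons, List.sum_nil]
        have hkk : (k - 1) * ((n + k) / k) + (n + k) / k = k * ((n + k) / k) := by
          have : k - 1 + 1 = k := by omega
          nlinarith [this]
        omega
      | i + 1 =>
        have hlen : i < (greedyList k (n + 1 - (n + k) / k)).length := by
          simpa using h
        obtain ⟨hp1, hp2⟩ := ih (n + 1 - (n + k) / k) (by omega) i hlen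
        simp only [List.take_succ_cons, List.sum_cons, List.get_cons_succ]
        exact ⟨hp1, by omega⟩

/-- Split `r` into parts each of size at most `c`. -/
def splitList (c r : ℕ) : List ℕ :=
  List.replicate (r / c) c ++ (if r % c = 0 then [] else [r % c])

lemma splitList_sum (c r : ℕ) : (splitList c r).sum = r := by
  unfold splitList
  have hd := Nat.div_add_mod r c
  by_cases h : r % c = 0 <;>
    simp [h, List.sum_replicate, smul_eq_mul, Nat.mul_comm] <;> omega

lemma splitList_length (c r d : ℕ) (hc : 0 < c) (hr : r ≤ d * c) :
    (splitList c r).length ≤ d := by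
  unfold splitList
  have hd := Nat.div_add_mod r c
  have hm : r % c < c := Nat.mod_lt _ hc
  have hdiv : r / c ≤ d := by
    calc r / c ≤ (d * c) / c := Nat.div_le_div_right hr
      _ = d := Nat.mul_div_cancel _ hc
  by_cases h : r % c = 0
  · simpa [h] using hdiv
  · simp only [h, if_neg, List.length_append, List.length_replicate, List.length_singleton,
      if_false]
    have hp : 0 < r % c := Nat.pos_of_ne_zero h
    have : r / c < d := by
      rcases Nat.lt_or_ge (r / c) d with h' | h'
      · exact h'
      · exfalso
        have he : r / c = d := le_antisymm hdiv h'
        have h2 : c * d + r % c = r := by rw [← he]; omega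
        have h3 : c * d = d * c := Nat.mul_comm c d
        linarith
    omega

lemma splitList_mem (c r : ℕ) (hc : 0 < c) :
    ∀ x ∈ splitList c r, 0 < x ∧ x ≤ c := by
  intro x hx
  unfold splitList at hx
  rcases List.mem_append.mp hx with h | h
  · rw [List.eq_of_mem_replicate h]; exact ⟨hc, le_refl c⟩
  · by_cases h0 : r % c = 0
    · simp [h0] at h
    · simp [h0] at h
      subst h
      exact ⟨Nat.pos_of_ne_zero h0, le_of_lt (Nat.mod_lt _ hc)⟩

/-- Parts `> c` contribute only to blocks of sum `> c`. -/
lemma sum_filter_le_filter_blocks (P : Multiset (Multiset ℕ)) (c : ℕ) :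
    ((P.sum).filter (fun x => c < x)).sum ≤
      ((P.map Multiset.sum).filter (fun x => c < x)).sum := by
  induction P using Multiset.induction_on with
  | empty => simp
  | cons b P ih =>
    rw [Multiset.sum_cons, Multiset.filter_add, Multiset.sum_add, Multiset.map_cons]
    by_cases h : c < b.sum
    · rw [Multiset.filter_cons_of_pos _ h, Multiset.sum_cons]
      have h1 : (b.filter (fun x => c < x)).sum ≤ b.sum := by
        conv_rhs => rw [← Multiset.filter_add_not (fun x => c < x) b]
        rw [Multiset.sum_add]
        exact Nat.le_add_right _ _
      exact Nat.add_le_add h1 ih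
    · rw [Multiset.filter_cons_of_neg _ h]
      have h0 : b.filter (fun x => c < x) = 0 := by
        rw [Multiset.filter_eq_nil]
        intro a ha
        have : a ≤ b.sum := Multiset.single_le_sum (fun y _ => Nat.zero_le y) a ha
        omega
      rw [h0]
      simpa using ih

/-- prefix sums of any partition `lam` of `n` generating all
`k`-partitions of `n` are dominated by the prefix sums of the greedy
partition `μ = greedyList k n`. -/
theorem prefix_sums_le_greedy (n k : ℕ) (hn : 1 ≤ n) (hk : 1 ≤ k)
    (lam : List ℕ) (hsorted : lam.Pairwise (· ≥ ·))
    (hpart : IsPartition n (↑lam : Multiset ℕ))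
    (hgen : GeneratesAll n k (↑lam : Multiset ℕ)) :
    ∀ m : ℕ, 1 ≤ m → m ≤ min (greedyList k n).length lam.length →
      (lam.take m).sum ≤ ((greedyList k n).take m).sum := by
  have hk0 : k ≠ 0 := by omega
  set L := greedyList k n with hL
  have hLsum : L.sum = n := greedy_sum k hk0 n
  have main : ∀ m : ℕ, m ≤ min L.length lam.length →
      (lam.take m).sum ≤ (L.take m).sum := by
    intro m
    induction m with
    | zero => simp
    | succ m ih =>
      intro hm
      have hmL : m < L.length := by omega
      have hmlam : m < lam.length := by omega
      have ihm := ih (by omega)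
      by_contra hcon
      push_neg at hcon
      -- c = the (m+1)-st greedy part
      set c := L.get ⟨m, hmL⟩ with hc
      obtain ⟨hc1, hspec⟩ := greedy_spec k hk0 n m hmL
      rw [← hc] at hc1 hspec
      have hLtake : (L.take (m+1)).sum = (L.take m).sum + c :=
        List.sum_take_succ L m hmL
      have hlamtake : (lam.take (m+1)).sum = (lam.take m).sum + lam.get ⟨m, hmlam⟩ :=
        List.sum_take_succ lam m hmlam
      -- S = greedy prefix sum, r = remainder
      set S := (L.take (m+1)).sum with hS
      have hSn : S ≤ n := by
        conv_rhs => rw [← hLsum, ← List.take_append_drop (m+1) L]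
        rw [List.sum_append]
        exact Nat.le_add_right _ _
      set r := n - S with hr
      have hrc : r ≤ (k-1) * c := by omega
      -- the target adversarial partition
      set ν : List ℕ := S :: splitList c r with hν
      have hνsum : (ν : List ℕ).sum = n := by
        rw [hν, List.sum_cons, splitList_sum]; omega
      have hνpos : ∀ x ∈ ν, 0 < x := by
        intro x hx
        rcases List.mem_cons.mp hx with h | h
        · subst h; omega
        · exact (splitList_mem c r hc1 x h).1
      have hνcard : Multiset.card (↑ν : Multiset ℕ) ≤ k := by
        rw [Multiset.coe_card, hν, List.length_cons]
        have := splitList_length c r (k-1) hc1 hrc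
        omega
      obtain ⟨P, hPsum, hPmap⟩ := hgen ↑ν ⟨by simpa using hνpos, by simpa using hνsum⟩ hνcard
      -- every element of lam.take (m+1) exceeds c
      have hgetm : c < lam.get ⟨m, hmlam⟩ := by omega
      have htakegt : ∀ x ∈ lam.take (m+1), c < x := by
        intro x hx
        obtain ⟨i, hi, hix⟩ := List.mem_take_iff_getElem.mp hx
        have hiL : i < lam.length := lt_of_lt_of_le hi (min_le_right _ _)
        have : lam.get ⟨m, hmlam⟩ ≤ lam[i] := by
          rcases Nat.lt_or_ge i m with h' | h'
          · exact hsorted.rel_get_of_lt (by simpa using h')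
          · have : i = m := by omega
            subst this; rfl
        omega
      -- chain of inequalities
      have step1 : (lam.take (m+1)).sum ≤ ((↑lam : Multiset ℕ).filter (fun x => c < x)).sum := by
        rw [Multiset.filter_coe, Multiset.sum_coe]
        conv_rhs => rw [← List.take_append_drop (m+1) lam]
        rw [List.filter_append, List.sum_append]
        have : List.filter (fun b => decide (c < b)) (lam.take (m+1)) = lam.take (m+1) :=
          List.filter_eq_self.mpr (fun a ha => by simpa using htakegt a ha)
        rw [this]
        exact Nat.le_add_right _ _
      have step2 : ((↑lam : Multiset ℕ).filter (fun x => c < x)).sum ≤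
          (((↑ν : Multiset ℕ)).filter (fun x => c < x)).sum := by
        rw [← hPsum, ← hPmap]
        exact sum_filter_le_filter_blocks P c
      have step3 : (((↑ν : Multiset ℕ)).filter (fun x => c < x)).sum ≤ S := by
        rw [Multiset.filter_coe, Multiset.sum_coe, hν]
        have hsl : List.filter (fun b => decide (c < b)) (splitList c r) = [] := by
          rw [List.filter_eq_nil_iff]
          intro a ha
          have := (splitList_mem c r hc1 a ha).2
          simpa using by omega
        by_cases h : c < S
        · rw [List.filter_cons_of_pos (by simpa using h), hsl]
          simp
        · rw [List.filter_cons_of_neg (by simpa using h), hsl]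
          simp
      omega
  intro m _ hm
  exact main m hm
end

section
/- Let n ≥ 1 and k ≥ 1 be integers, and let μ be the greedy partition of n defined by μ_1 = ⌈n/k⌉ and μ_i = ⌈(n − Σ_{j<i} μ_j)/k⌉ for i > 1 (stopping when the remainder reaches 0). Then every partition λ of n that generates all k-partitions of n satisfies |λ| ≥ |μ|; that is, μ has minimum size among all partitions of n that generate all k-partitions of n. -/
/-!
Let `λ` generate all `k`-partitions of `n`, let `c` be a part of `λ`, and let `S` and `T` be the
sums of the parts `≥ c` and `< c`. If `T < (k - 1)(c - 1)`, then `T + 1` splits into at most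
`k - 1` parts smaller than `c`, and with `S - 1` these form a `k`-partition of `n` that `λ` cannot
generate: every part `≥ c` would have to go into the block of `S - 1`. So, listing `λ` in
decreasing order, each part is at most `⌈r / k⌉`, where `r` is the sum of it and the later parts.
Hence no part of `λ` removes more from the remainder than the greedy step does, and since the
greedy length is monotone in the remainder, induction along `λ` bounds it by `|λ|`.
-/

theorem exists_isPartition_card_le_of_le_mul (b : ℕ) :
    ∀ m w : ℕ, w ≤ m * b → ∃ s, IsPartition w s ∧ Multiset.card s ≤ m ∧ ∀ x ∈ s, x ≤ b
  | 0, w, h => ⟨0, ⟨by simp, by simp at h; simp [h]⟩, le_rfl, by simp⟩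
  | m + 1, w, h => by
    rcases le_or_gt w (m * b) with hw | hw
    · obtain ⟨s, hs, hcard, hle⟩ := exists_isPartition_card_le_of_le_mul b m w hw
      exact ⟨s, hs, hcard.trans m.le_succ, hle⟩
    · rw [Nat.succ_mul] at h
      obtain ⟨s, ⟨hpos, hsum⟩, hcard, hle⟩ :=
        exists_isPartition_card_le_of_le_mul b m (w - min w b) (by omega)
      refine ⟨min w b ::ₘ s, ⟨?_, ?_⟩, by simpa using hcard, ?_⟩
      · simp only [Multiset.mem_cons, forall_eq_or_imp]
        exact ⟨by omega, hpos⟩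
      · rw [Multiset.sum_cons, hsum]; omega
      · simpa using hle

theorem Generates.sum_filter_le {μ s : Multiset ℕ} {v c : ℕ} (h : Generates μ (v ::ₘ s))
    (hs : ∀ x ∈ s, x < c) : (μ.filter (c ≤ ·)).sum ≤ v := by
  obtain ⟨P, hPμ, hPsum⟩ := h
  obtain ⟨B, hB, rfl⟩ := Multiset.mem_map.1 (hPsum ▸ Multiset.mem_cons_self _ _)
  rw [← Multiset.cons_erase hB, Multiset.map_cons, Multiset.cons_inj_right] at hPsum
  have hrest : ∀ x ∈ (P.erase B).sum, ¬c ≤ x := by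
    intro x hx
    obtain ⟨C, hC, hxC⟩ := Multiset.mem_join.1 hx
    have : C.sum < c := hs _ (hPsum ▸ Multiset.mem_map_of_mem _ hC)
    exact not_le.2 ((Multiset.le_sum_of_mem hxC).trans_lt this)
  rw [← hPμ, ← Multiset.cons_erase hB, Multiset.sum_cons, Multiset.filter_add,
    Multiset.filter_eq_nil.2 hrest, add_zero]
  conv_rhs => rw [← Multiset.filter_add_not (c ≤ ·) B, Multiset.sum_add]
  exact le_self_add

theorem mul_pred_le_sum_filter_lt {k c : ℕ} {lam : Multiset ℕ}
    (hgen : GeneratesAll lam.sum k lam) (hc : c ∈ lam) :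
    (k - 1) * (c - 1) ≤ (lam.filter (· < c)).sum := by
  by_contra! hlt
  set S := (lam.filter (c ≤ ·)).sum
  set T := (lam.filter (· < c)).sum
  have hST : S + T = lam.sum := by
    rw [← Multiset.sum_add]
    simp only [← not_le, Multiset.filter_add_not]
  have hcS : c ≤ S := Multiset.le_sum_of_mem (Multiset.mem_filter.2 ⟨hc, le_rfl⟩)
  obtain ⟨hk, hc1⟩ := CanonicallyOrderedAdd.mul_pos.1 (Nat.zero_lt_of_lt hlt)
  obtain ⟨s, ⟨hpos, hsum⟩, hcard, hle⟩ :=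
    exists_isPartition_card_le_of_le_mul (c - 1) (k - 1) (T + 1) hlt
  have hpart : IsPartition lam.sum ((S - 1) ::ₘ s) :=
    ⟨by simpa using ⟨by omega, hpos⟩, by rw [Multiset.sum_cons, hsum]; omega⟩
  have := (hgen _ hpart (by simp only [Multiset.card_cons]; omega)).sum_filter_le (c := c)
    fun x hx => by have := hle x hx; omega
  omega

theorem greedyList_of_pos {k m : ℕ} (hk : 0 < k) (hm : 0 < m) :
    greedyList k m = (m + k - 1) / k :: greedyList k (m - (m + k - 1) / k) := by
  obtain ⟨m, rfl⟩ := Nat.exists_eq_add_of_lt hm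
  rw [zero_add, show m + 1 + k - 1 = m + k by omega, greedyList, dif_neg hk.ne']

theorem monotone_sub_ceilDiv {k : ℕ} (hk : 0 < k) : Monotone fun m => m - (m + k - 1) / k := by
  refine monotone_nat_of_le_succ fun m => ?_
  have : (m + 1 + k - 1) / k ≤ (m + k - 1) / k + 1 := by
    rw [← Nat.add_div_right _ hk]
    exact Nat.div_le_div_right (by omega)
  omega

theorem monotone_length_greedyList {k : ℕ} (hk : 0 < k) :
    Monotone fun m => (greedyList k m).length := by
  intro a b hab
  induction b using Nat.strong_induction_on generalizing a with
  | _ b ih =>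
    rcases Nat.eq_zero_or_pos a with rfl | ha
    · simp [greedyList]
    have hceil : 0 < (b + k - 1) / k := Nat.div_pos (by omega) hk
    simp only [greedyList_of_pos hk ha, greedyList_of_pos hk (ha.trans_le hab), List.length_cons]
    exact Nat.succ_le_succ (ih _ (by omega) (monotone_sub_ceilDiv hk hab))

theorem le_ceilDiv_of_mul_pred_le {k a t : ℕ} (hk : 0 < k) (ha : 0 < a)
    (h : (k - 1) * (a - 1) ≤ t) : a ≤ (a + t + k - 1) / k := by
  rw [Nat.le_div_iff_mul_le hk]
  obtain ⟨a, rfl⟩ := Nat.exists_eq_add_of_lt ha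
  obtain ⟨k, rfl⟩ := Nat.exists_eq_add_of_lt hk
  rw [show 0 + a + 1 + t + (0 + k + 1) - 1 = a + t + k + 1 by omega]
  simp only [zero_add, Nat.add_sub_cancel] at h
  nlinarith

theorem length_greedyList_le_length {k : ℕ} (hk : 0 < k) :
    ∀ {l : List ℕ}, l.Pairwise (· ≥ ·) → (∀ x ∈ l, 0 < x) →
      (∀ c ∈ l, (k - 1) * (c - 1) ≤ (l.filter (· < c)).sum) →
      (greedyList k l.sum).length ≤ l.length
  | [], _, _, _ => by simp [greedyList]
  | a :: t, hsorted, hpos, hbound => by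
    rw [List.pairwise_cons] at hsorted
    have ha : 0 < a := hpos a List.mem_cons_self
    have hfilter : ∀ c ∈ t, (a :: t).filter (· < c) = t.filter (· < c) := fun c hc =>
      List.filter_cons_of_neg (by simpa using hsorted.1 c hc)
    have htail : (greedyList k t.sum).length ≤ t.length :=
      length_greedyList_le_length hk hsorted.2 (fun x hx => hpos x (List.mem_cons_of_mem a hx))
        fun c hc => hfilter c hc ▸ hbound c (List.mem_cons_of_mem a hc)
    have hhead : a ≤ (a + t.sum + k - 1) / k := by
      refine le_ceilDiv_of_mul_pred_le hk ha ((hbound a List.mem_cons_self).trans ?_)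
      simp only [List.filter_cons, lt_irrefl, decide_false]
      exact List.filter_sublist.sum_le_sum fun _ _ => Nat.zero_le _
    rw [List.sum_cons, greedyList_of_pos hk (by omega), List.length_cons, List.length_cons]
    exact Nat.succ_le_succ ((monotone_length_greedyList hk (by omega)).trans htail)

theorem length_greedyList_le_card {k : ℕ} (hk : 0 < k) {lam : Multiset ℕ}
    (hpos : ∀ x ∈ lam, 0 < x) (hbound : ∀ c ∈ lam, (k - 1) * (c - 1) ≤ (lam.filter (· < c)).sum) :
    (greedyList k lam.sum).length ≤ Multiset.card lam := by
  rw [← Multiset.sort_eq lam (· ≥ ·)] at hpos hbound ⊢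
  simp only [Multiset.mem_coe, Multiset.filter_coe, Multiset.sum_coe, Multiset.coe_card]
    at hpos hbound ⊢
  exact length_greedyList_le_length hk (Multiset.pairwise_sort _ _) hpos hbound

theorem greedy_minimal_size_general (n k : ℕ) (hk : 1 ≤ k)
    (lam : Multiset ℕ) (hpart : IsPartition n lam)
    (hgen : GeneratesAll n k lam) :
    (greedyList k n).length ≤ Multiset.card lam := by
  obtain ⟨hpos, rfl⟩ := hpart
  exact length_greedyList_le_card hk hpos fun c hc => mul_pred_le_sum_filter_lt hgen hc

/-- the greedy partition has minimum size among all partitions of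
`n` that generate all `k`-partitions of `n`. -/
theorem greedy_minimal_size (n k : ℕ) (hn : 1 ≤ n) (hk : 1 ≤ k)
    (lam : Multiset ℕ) (hpart : IsPartition n lam)
    (hgen : GeneratesAll n k lam) :
    (greedyList k n).length ≤ Multiset.card lam :=
  greedy_minimal_size_general n k hk lam hpart hgen
end
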